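/- Let (X,d_X) be a compact connected geodesic space with finite metric Reeb graph (G,d_G) of d = d_X(r,·) and quotient map π : X → G. Then d_GH(X,G) ≤ (β_1(G)+1)·M, where β_1(G) is the first Betti number of G and M = sup_{p∈G} diam(π^{-1}(p)). -/

import Mathlib

/-!
Projecting a geodesic of `X` gives a path in `G` along which `d_*` is 1-Lipschitz; since `d_G` is
locally bounded by the variation of `d_*`, the map `π` is 1-Lipschitz.

Conversely, join `π x` to `π y` by an almost shortest walk that never revisits a point, and lift
it to `X` starting from `x`. A descent along an edge is realized exactly by a geodesic towards
`r`, except at a merging vertex, where it first needs a jump inside the fibre. Every jump inside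
a fibre costs at most `M`; jumps occur at merging vertices, at the start of ascending runs (each
preceded by a peak, which is a merging vertex, except the first) and at the end. Every vertex
other than `π r` has an incoming edge and every merging vertex two, so there are at most
`β₁(G)` merging vertices. Hence `d_X(x, y) ≤ d_G(π x, π y) + 2 (β₁(G) + 1) M`, and the graph
of `π` is a `2 (β₁(G) + 1) M`-correspondence.
-/

open Set Metric

noncomputable section

/-- A finite metric graph structure on a metric space `G`: a finite set of edges, each
isometrically parametrized by arc length on `[0, len e]`, covering `G`, with pairwise
disjoint open edges, and such that the metric of `G` is the associated shortest-path
metric (i.e. the largest pseudometric making all edge parametrizations 1-Lipschitz). -/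
structure MetricGraphStruct (G : Type*) [MetricSpace G] where
  /-- the (finite) index type of edges -/
  E : Type
  fintypeE : Fintype E
  /-- length of each edge -/
  len : E → ℝ
  len_pos : ∀ e, 0 < len e
  /-- arc-length parametrization of each edge on `[0, len e]` -/
  param : E → ℝ → G
  param_lipschitz : ∀ e, LipschitzOnWith 1 (param e) (Set.Icc 0 (len e))
  /-- the edges cover `G` -/
  cover : ∀ x : G, ∃ e, ∃ t ∈ Set.Icc 0 (len e), param e t = x
  /-- each open edge is simple -/
  injOn : ∀ e, Set.InjOn (param e) (Set.Ioo 0 (len e))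
  /-- open edges are pairwise disjoint -/
  disjoint_interiors : ∀ e₁ e₂, e₁ ≠ e₂ → ∀ s ∈ Set.Ioo 0 (len e₁), ∀ t ∈ Set.Ioo 0 (len e₂),
    param e₁ s ≠ param e₂ t
  /-- endpoints of edges do not lie in open edges -/
  endpoint_not_interior : ∀ e e', ∀ t ∈ Set.Ioo 0 (len e'),
    param e 0 ≠ param e' t ∧ param e (len e) ≠ param e' t
  /-- the metric of `G` is the shortest-path metric: it is maximal among pseudometrics
  making every edge parametrization 1-Lipschitz -/
  dist_maximal : ∀ δ : G → G → ℝ, (∀ p, δ p p = 0) → (∀ p q, δ p q = δ q p) →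
    (∀ p q s, δ p s ≤ δ p q + δ q s) →
    (∀ e, ∀ s ∈ Set.Icc 0 (len e), ∀ t ∈ Set.Icc 0 (len e),
      δ (param e s) (param e t) ≤ |s - t|) →
    ∀ p q, δ p q ≤ dist p q

namespace MetricGraphStruct

variable {G : Type*} [MetricSpace G] (M : MetricGraphStruct G)

/-- first endpoint of an edge -/
def src (e : M.E) : G := M.param e 0

/-- second endpoint of an edge -/
def tgt (e : M.E) : G := M.param e (M.len e)

/-- the set of vertices (endpoints of edges) -/
def vertexSet : Set G := {v | ∃ e, v = M.src e ∨ v = M.tgt e}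

/-- `N_E(α)`: the number of edges of length at most `α` -/
def NE (α : ℝ) : ℕ := Nat.card {e : M.E // M.len e ≤ α}

/-- the first Betti number of a connected finite graph: `#E - #V + 1` -/
def betti1 : ℕ := Nat.card M.E + 1 - Nat.card M.vertexSet

end MetricGraphStruct

end

/-- A geodesic metric space: any two points are joined by an isometrically embedded
segment. -/
def IsGeodesicSpace (X : Type*) [MetricSpace X] : Prop :=
  ∀ x y : X, ∃ γ : ℝ → X, γ 0 = x ∧ γ (dist x y) = y ∧
    ∀ s ∈ Set.Icc 0 (dist x y), ∀ t ∈ Set.Icc 0 (dist x y), dist (γ s) (γ t) = |s - t|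

/-- The Reeb relation of the distance function `d = d_X(r, ·)`: two points are related if
they have the same distance to `r` and lie in the same path-connected component of the
corresponding level set of `d`. -/
def reebRel {X : Type*} [MetricSpace X] (r : X) (x y : X) : Prop :=
  dist r x = dist r y ∧ JoinedIn {z | dist r z = dist r x} x y

/-- `G` is the metric Reeb graph of the distance function `d = d_X(r, ·)` on `X`:
`π : X → G` is the (continuous, surjective) quotient map of the Reeb relation, `d`
factors as `d_* ∘ π`, and `G` carries a finite metric graph structure whose edges are
parametrized so that `d_*` increases at unit speed along each edge (hence each edge has
length the variation of `d_*` along it), the metric on `G` being the associated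
shortest-path metric. -/
structure ReebGraphOf (X : Type*) [MetricSpace X] (r : X)
    (G : Type*) [MetricSpace G] where
  /-- the finite metric graph structure on `G` -/
  graph : MetricGraphStruct G
  /-- the quotient map -/
  π : X → G
  continuous_π : Continuous π
  surj : Function.Surjective π
  /-- `π` identifies exactly the points equivalent under the Reeb relation -/
  eq_iff : ∀ x y : X, π x = π y ↔ reebRel r x y
  /-- the function induced by `d` on the quotient -/
  dStar : G → ℝ
  dStar_π : ∀ x : X, dStar (π x) = dist r x
  /-- `d_*` increases at unit speed along each (oriented) edge -/
  dStar_param : ∀ e : graph.E, ∀ t ∈ Set.Icc 0 (graph.len e),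
    dStar (graph.param e t) = dStar (graph.param e 0) + t

namespace ReebGraphOf

variable {X : Type*} [MetricSpace X] {r : X} {G : Type*} [MetricSpace G]

/-- A merging vertex: a point of `G` which is the terminal endpoint of at least two
distinct edges (edges being oriented by increasing `d_*`). -/
def IsMergingVertex (R : ReebGraphOf X r G) (v : G) : Prop :=
  ∃ e₁ e₂ : R.graph.E, e₁ ≠ e₂ ∧ R.graph.tgt e₁ = v ∧ R.graph.tgt e₂ = v

/-- `M`: the supremum of the diameters of the fibers of `π`. -/
noncomputable def fiberDiamSup (R : ReebGraphOf X r G) : ℝ := ⨆ p : G, Metric.diam (R.π ⁻¹' {p})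

end ReebGraphOf

open Filter Topology

namespace MetricGraphStruct

variable {G : Type*} [MetricSpace G] (M : MetricGraphStruct G)

instance : Fintype M.E := M.fintypeE

def edgeSet (e : M.E) : Set G := M.param e '' Icc 0 (M.len e)

theorem isCompact_edgeSet (e : M.E) : IsCompact (M.edgeSet e) :=
  isCompact_Icc.image_of_continuousOn (M.param_lipschitz e).continuousOn

theorem eventually_mem_edgeSet_imp (x : G) :
    ∀ᶠ y in 𝓝 x, ∀ f, y ∈ M.edgeSet f → x ∈ M.edgeSet f := by
  have hclosed : IsClosed (⋃ f ∈ {f | x ∉ M.edgeSet f}, M.edgeSet f) :=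
    (Set.toFinite _).isClosed_biUnion fun f _ => (M.isCompact_edgeSet f).isClosed
  filter_upwards [hclosed.isOpen_compl.mem_nhds (by simp)] with y hy f hyf
  by_contra hxf
  exact hy (mem_biUnion hxf hyf)

variable {M}

theorem dist_param_le {e : M.E} {s t : ℝ} (hs : s ∈ Icc 0 (M.len e))
    (ht : t ∈ Icc 0 (M.len e)) : dist (M.param e s) (M.param e t) ≤ |s - t| := by
  simpa [Real.dist_eq] using (M.param_lipschitz e).dist_le_mul s hs t ht

theorem eq_of_param_eq {e f : M.E} {s t : ℝ} (hs : s ∈ Ioo 0 (M.len e))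
    (ht : t ∈ Icc 0 (M.len f)) (h : M.param e s = M.param f t) : e = f := by
  by_contra hne
  rcases ht.1.eq_or_lt with rfl | h0
  · exact (M.endpoint_not_interior f e s hs).1 h.symm
  rcases ht.2.eq_or_lt with rfl | hl
  · exact (M.endpoint_not_interior f e s hs).2 h.symm
  · exact M.disjoint_interiors e f hne s hs t ⟨h0, hl⟩ h

theorem notMem_Ioo_of_param_eq_tgt {e f : M.E} {s : ℝ} (h : M.param e s = M.tgt f) :
    s ∉ Ioo 0 (M.len e) := fun hs => (M.endpoint_not_interior f e s hs).2 h.symm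

/-- A piece of an edge, traversed from `param e a` to `param e b` in either direction. -/
structure Step (M : MetricGraphStruct G) where
  e : M.E
  a : ℝ
  b : ℝ

namespace Step

variable (s : M.Step)

def IsValid : Prop := s.a ∈ Icc 0 (M.len s.e) ∧ s.b ∈ Icc 0 (M.len s.e)

def start : G := M.param s.e s.a

def finish : G := M.param s.e s.b

def length : ℝ := |s.a - s.b|

def reverse : M.Step := ⟨s.e, s.b, s.a⟩

@[simp] theorem reverse_start : s.reverse.start = s.finish := rfl
@[simp] theorem reverse_finish : s.reverse.finish = s.start := rfl
@[simp] theorem reverse_length : s.reverse.length = s.length := abs_sub_comm _ _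
@[simp] theorem isValid_reverse : s.reverse.IsValid ↔ s.IsValid := and_comm

theorem length_nonneg : 0 ≤ s.length := abs_nonneg _

end Step

variable (M)

inductive IsWalk : G → G → List M.Step → Prop
  | nil (p : G) : IsWalk p p []
  | cons {s : M.Step} {W : List M.Step} {q : G} (hs : s.IsValid) (hW : IsWalk s.finish q W) :
      IsWalk s.start q (s :: W)

variable {M}

def walkLength (W : List M.Step) : ℝ := (W.map Step.length).sum

def walkSupport (p : G) (W : List M.Step) : List G := p :: W.map Step.finish

def walkReverse (W : List M.Step) : List M.Step := (W.map Step.reverse).reverse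

@[simp] theorem walkLength_nil : walkLength ([] : List M.Step) = 0 := rfl

@[simp] theorem walkLength_cons (s : M.Step) (W : List M.Step) :
    walkLength (s :: W) = s.length + walkLength W := List.sum_cons

theorem walkLength_append (W₁ W₂ : List M.Step) :
    walkLength (W₁ ++ W₂) = walkLength W₁ + walkLength W₂ := by
  simp [walkLength]

theorem walkLength_nonneg (W : List M.Step) : 0 ≤ walkLength W :=
  List.sum_nonneg (by simpa using fun s _ => s.length_nonneg)

theorem walkLength_drop_le (W : List M.Step) (k : ℕ) :
    walkLength (W.drop k) ≤ walkLength W := by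
  induction W generalizing k with
  | nil => simp
  | cons s W ih =>
    cases k with
    | zero => rfl
    | succ k => simpa using (ih k).trans (le_add_of_nonneg_left s.length_nonneg)

@[simp] theorem walkLength_walkReverse (W : List M.Step) :
    walkLength (walkReverse W) = walkLength W := by
  simp [walkReverse, walkLength, Function.comp_def]

namespace IsWalk

theorem cons_iff {p q : G} {s : M.Step} {W : List M.Step} :
    M.IsWalk p q (s :: W) ↔ p = s.start ∧ s.IsValid ∧ M.IsWalk s.finish q W :=
  ⟨by rintro (_ | ⟨hs, hW⟩); exact ⟨rfl, hs, hW⟩,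
    by rintro ⟨rfl, hs, hW⟩; exact cons hs hW⟩

theorem eq_of_nil {p q : G} (h : M.IsWalk p q []) : p = q := by
  cases h; rfl

theorem single {s : M.Step} (hs : s.IsValid) : M.IsWalk s.start s.finish [s] :=
  cons hs (nil _)

theorem append {p q v : G} {W₁ W₂ : List M.Step} (h₁ : M.IsWalk p q W₁)
    (h₂ : M.IsWalk q v W₂) : M.IsWalk p v (W₁ ++ W₂) := by
  induction h₁ with
  | nil => exact h₂
  | cons hs _ ih => exact cons hs (ih h₂)

theorem reverse {p q : G} {W : List M.Step} (h : M.IsWalk p q W) :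
    M.IsWalk q p (walkReverse W) := by
  induction h with
  | nil p => exact nil p
  | @cons s W q hs _ ih =>
    simpa [walkReverse] using ih.append (single ((Step.isValid_reverse s).2 hs))

theorem drop_of_mem_walkSupport {p q v : G} {W : List M.Step} (hW : M.IsWalk p q W)
    (hv : v ∈ walkSupport p W) : ∃ k, M.IsWalk v q (W.drop k) := by
  induction hW with
  | nil p =>
    rw [walkSupport, List.map_nil, List.mem_singleton] at hv
    obtain rfl := hv
    exact ⟨0, nil v⟩
  | @cons s W q hs hW ih =>
    rcases List.mem_cons.1 hv with rfl | hv
    · exact ⟨0, cons hs hW⟩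
    · obtain ⟨k, hk⟩ := ih hv
      exact ⟨k + 1, hk⟩

theorem start_ne_finish_of_nodup {p q : G} {W : List M.Step} (hW : M.IsWalk p q W)
    (hnd : (walkSupport p W).Nodup) : ∀ s ∈ W, s.a ≠ s.b := by
  induction hW with
  | nil => simp
  | @cons s W q hs hW ih =>
    rw [walkSupport, List.map_cons, List.nodup_cons] at hnd
    intro t ht hab
    rcases List.mem_cons.1 ht with rfl | ht
    · exact hnd.1 (by simp [Step.start, Step.finish, hab])
    · exact ih hnd.2 t ht hab

end IsWalk

variable (M)

theorem eventually_exists_step (x : G) :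
    ∀ᶠ y in 𝓝 x, ∃ s : M.Step, s.IsValid ∧ s.start = x ∧ s.finish = y := by
  filter_upwards [M.eventually_mem_edgeSet_imp x] with y hy
  obtain ⟨f, t, ht, rfl⟩ := M.cover y
  obtain ⟨s, hs, rfl⟩ := hy f ⟨t, ht, rfl⟩
  exact ⟨⟨f, s, t⟩, ⟨hs, ht⟩, rfl, rfl⟩

theorem exists_isWalk [ConnectedSpace G] (p q : G) : ∃ W, M.IsWalk p q W := by
  set C := {y | ∃ W, M.IsWalk p y W}
  have hopen : IsOpen C := isOpen_iff_mem_nhds.2 fun x ⟨W, hW⟩ => by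
    filter_upwards [M.eventually_exists_step x] with y ⟨s, hs, hx, hy⟩
    exact ⟨W ++ [s], hW.append (hx ▸ hy ▸ IsWalk.single hs)⟩
  have hclosed : IsClosed C := isOpen_compl_iff.1 <| isOpen_iff_mem_nhds.2 fun x hx => by
    filter_upwards [M.eventually_exists_step x] with y ⟨s, hs, hx', hy⟩ ⟨W, hW⟩
    refine hx ⟨W ++ [s.reverse], hW.append ?_⟩
    simpa [hx', hy] using IsWalk.single ((Step.isValid_reverse s).2 hs)
  have hC : C = univ := IsClopen.eq_univ ⟨hclosed, hopen⟩ ⟨p, [], IsWalk.nil p⟩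
  exact (show q ∈ C from hC ▸ mem_univ q)

noncomputable def walkDist (p q : G) : ℝ := sInf (walkLength '' {W | M.IsWalk p q W})

theorem walkDist_le {p q : G} {W : List M.Step} (hW : M.IsWalk p q W) :
    M.walkDist p q ≤ walkLength W :=
  csInf_le ⟨0, by rintro _ ⟨W, -, rfl⟩; exact walkLength_nonneg W⟩ ⟨W, hW, rfl⟩

section walkDist

variable [ConnectedSpace G]

theorem exists_walkLength_lt_walkDist_add (p q : G) {ε : ℝ} (hε : 0 < ε) :
    ∃ W, M.IsWalk p q W ∧ walkLength W < M.walkDist p q + ε := by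
  obtain ⟨W, hW⟩ := M.exists_isWalk p q
  obtain ⟨_, ⟨W, hW, rfl⟩, hlt⟩ :=
    Real.lt_sInf_add_pos (s := walkLength '' {W | M.IsWalk p q W}) ⟨_, W, hW, rfl⟩ hε
  exact ⟨W, hW, hlt⟩

theorem walkDist_le_dist (p q : G) : M.walkDist p q ≤ dist p q := by
  refine M.dist_maximal M.walkDist (fun p => ?_) (fun p q => ?_) (fun p q v => ?_) ?_ p q
  · obtain ⟨W, hW⟩ := M.exists_isWalk p p
    exact le_antisymm (M.walkDist_le (IsWalk.nil p))
      (le_csInf ⟨_, W, hW, rfl⟩ (by rintro _ ⟨W, -, rfl⟩; exact walkLength_nonneg W))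
  · have : walkLength '' {W | M.IsWalk p q W} = walkLength '' {W | M.IsWalk q p W} := by
      ext L
      exact ⟨fun ⟨W, hW, hL⟩ => ⟨walkReverse W, hW.reverse, by simpa using hL⟩,
        fun ⟨W, hW, hL⟩ => ⟨walkReverse W, hW.reverse, by simpa using hL⟩⟩
    rw [walkDist, walkDist, this]
  · refine le_of_forall_pos_lt_add fun ε hε => ?_
    obtain ⟨W₁, hW₁, h₁⟩ := M.exists_walkLength_lt_walkDist_add p q (half_pos hε)
    obtain ⟨W₂, hW₂, h₂⟩ := M.exists_walkLength_lt_walkDist_add q v (half_pos hε)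
    have := M.walkDist_le (hW₁.append hW₂)
    rw [walkLength_append] at this
    linarith
  · intro e s hs t ht
    simpa [walkLength, Step.length, Step.start, Step.finish] using
      M.walkDist_le (IsWalk.single (s := ⟨e, s, t⟩) ⟨hs, ht⟩)

theorem exists_walkLength_lt_dist_add (p q : G) {ε : ℝ} (hε : 0 < ε) :
    ∃ W, M.IsWalk p q W ∧ walkLength W < dist p q + ε := by
  obtain ⟨W, hW, hlt⟩ := M.exists_walkLength_lt_walkDist_add p q hε
  exact ⟨W, hW, hlt.trans_le (by linarith [M.walkDist_le_dist p q])⟩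

end walkDist

namespace IsWalk

variable {M}

theorem exists_shorter_of_not_nodup {p q : G} {W : List M.Step} (hW : M.IsWalk p q W)
    (hnd : ¬ (walkSupport p W).Nodup) :
    ∃ W', M.IsWalk p q W' ∧ walkLength W' ≤ walkLength W ∧ W'.length < W.length := by
  induction hW with
  | nil p => simp [walkSupport] at hnd
  | @cons s W q hs hW ih =>
    rw [walkSupport, List.map_cons, List.nodup_cons] at hnd
    by_cases hmem : s.start ∈ walkSupport s.finish W
    · obtain ⟨k, hk⟩ := hW.drop_of_mem_walkSupport hmem
      refine ⟨W.drop k, hk, ?_, by simp only [List.length_drop, List.length_cons]; omega⟩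
      linarith [walkLength_drop_le W k, walkLength_cons s W, s.length_nonneg]
    · obtain ⟨W', hW', hlen, hlt⟩ := ih fun h => hnd ⟨hmem, h⟩
      exact ⟨s :: W', cons hs hW', by simpa using hlen, by simpa using hlt⟩

theorem exists_shorter_of_not_isChain (hinj : ∀ e, InjOn (M.param e) (Icc 0 (M.len e)))
    {p q : G} {W : List M.Step} (hW : M.IsWalk p q W)
    (hc : ¬ W.IsChain (fun s t => s.e ≠ t.e)) :
    ∃ W', M.IsWalk p q W' ∧ walkLength W' ≤ walkLength W ∧ W'.length < W.length := by
  induction W generalizing p with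
  | nil => exact absurd List.IsChain.nil hc
  | cons s W ih =>
    obtain ⟨rfl, hs, hW⟩ := cons_iff.1 hW
    cases W with
    | nil => exact absurd (List.IsChain.singleton s) hc
    | cons t W =>
      obtain ⟨hst, ht, hW'⟩ := cons_iff.1 hW
      rw [List.isChain_cons_cons] at hc
      by_cases he : s.e = t.e
      · obtain ⟨e, a, b⟩ := s
        obtain ⟨f, c, d⟩ := t
        obtain rfl : e = f := he
        obtain rfl : b = c := hinj e hs.2 ht.1 hst
        refine ⟨⟨e, a, d⟩ :: W, cons (s := ⟨e, a, d⟩) ⟨hs.1, ht.2⟩ hW', ?_, by simp⟩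
        simp only [walkLength_cons, Step.length]
        linarith [abs_sub_le a b d]
      · obtain ⟨W', hW', hlen, hlt⟩ := ih hW fun h => hc ⟨he, h⟩
        exact ⟨s :: W', cons hs hW', by simpa using hlen, by simpa using hlt⟩

/-- Shortcutting repeated points and merging consecutive pieces of the same edge does not
increase the length of a walk. -/
theorem exists_nodup_isChain (hinj : ∀ e, InjOn (M.param e) (Icc 0 (M.len e)))
    {p q : G} {W : List M.Step} (hW : M.IsWalk p q W) :
    ∃ W', M.IsWalk p q W' ∧ walkLength W' ≤ walkLength W ∧ (walkSupport p W').Nodup ∧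
      W'.IsChain (fun s t => s.e ≠ t.e) := by
  induction hn : W.length using Nat.strong_induction_on generalizing W with
  | _ n ih =>
    by_cases hnd : (walkSupport p W).Nodup
    · by_cases hc : W.IsChain (fun s t => s.e ≠ t.e)
      · exact ⟨W, hW, le_rfl, hnd, hc⟩
      · obtain ⟨W', hW', hlen, hlt⟩ := hW.exists_shorter_of_not_isChain hinj hc
        obtain ⟨W'', hW'', hlen', hgood⟩ := ih _ (hn ▸ hlt) hW' rfl
        exact ⟨W'', hW'', hlen'.trans hlen, hgood⟩
    · obtain ⟨W', hW', hlen, hlt⟩ := hW.exists_shorter_of_not_nodup hnd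
      obtain ⟨W'', hW'', hlen', hgood⟩ := ih _ (hn ▸ hlt) hW' rfl
      exact ⟨W'', hW'', hlen'.trans hlen, hgood⟩

end IsWalk

end MetricGraphStruct

theorem IsGeodesicSpace.exists_lipschitzWith {X : Type*} [MetricSpace X]
    (hX : IsGeodesicSpace X) (x y : X) :
    ∃ γ : ℝ → X, LipschitzWith 1 γ ∧ γ 0 = x ∧ γ (dist x y) = y ∧
      ∀ s ∈ Icc 0 (dist x y), ∀ t ∈ Icc 0 (dist x y), dist (γ s) (γ t) = |s - t| := by
  obtain ⟨γ, h0, h1, hiso⟩ := hX x y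
  have hext : ∀ s ∈ Icc 0 (dist x y), γ (projIcc 0 (dist x y) dist_nonneg s) = γ s :=
    fun s hs => by rw [projIcc_of_mem _ hs]
  refine ⟨fun s => γ (projIcc 0 (dist x y) dist_nonneg s), ?_, by simpa [hext] using h0,
    by simpa [hext] using h1,
    fun s hs t ht => by simp only [hext s hs, hext t ht, hiso s hs t ht]⟩
  refine LipschitzWith.of_dist_le_mul fun s t => ?_
  rw [hiso _ (Subtype.mem _) _ (Subtype.mem _), ← Real.dist_eq, ← Subtype.dist_eq]
  exact (LipschitzWith.projIcc dist_nonneg).dist_le_mul s t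

theorem GromovHausdorff.ghDist_le_of_surjective {X Y : Type*} [MetricSpace X] [CompactSpace X]
    [Nonempty X] [MetricSpace Y] [CompactSpace Y] [Nonempty Y] {Φ : X → Y}
    (hΦ : Function.Surjective Φ) {ε : ℝ}
    (H : ∀ x y, |dist x y - dist (Φ x) (Φ y)| ≤ ε) :
    GromovHausdorff.ghDist X Y ≤ ε / 2 := by
  simpa using GromovHausdorff.ghDist_le_of_approx_subsets (s := univ) (fun x => Φ x)
    (ε₁ := 0) (ε₃ := 0) (fun x => ⟨x, mem_univ x, by simp⟩)
    (fun y => ⟨⟨(hΦ y).choose, mem_univ _⟩, by simp [(hΦ y).choose_spec]⟩)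
    fun x y => H x y

namespace ReebGraphOf

open MetricGraphStruct

variable {X : Type*} [MetricSpace X] {r : X} {G : Type*} [MetricSpace G] (R : ReebGraphOf X r G)

theorem dStar_nonneg (g : G) : 0 ≤ R.dStar g := by
  obtain ⟨x, rfl⟩ := R.surj g
  exact R.dStar_π x ▸ dist_nonneg

theorem injOn_param (e : R.graph.E) : InjOn (R.graph.param e) (Icc 0 (R.graph.len e)) :=
  fun s hs t ht h => by linarith [R.dStar_param e s hs, R.dStar_param e t ht, congrArg R.dStar h]

section fiber

variable [CompactSpace X]

theorem dist_le_fiberDiamSup {x y : X} (h : R.π x = R.π y) : dist x y ≤ R.fiberDiamSup := by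
  have hbdd : BddAbove (range fun p : G => diam (R.π ⁻¹' {p})) :=
    ⟨diam (univ : Set X), by
      rintro _ ⟨p, rfl⟩
      exact diam_mono (subset_univ _) isCompact_univ.isBounded⟩
  exact (dist_le_diam_of_mem (s := R.π ⁻¹' {R.π y})
    (isCompact_univ.isBounded.subset (subset_univ _)) h rfl).trans (le_ciSup hbdd (R.π y))

theorem fiberDiamSup_nonneg [Nonempty X] : 0 ≤ R.fiberDiamSup :=
  dist_self (Classical.arbitrary X) ▸ R.dist_le_fiberDiamSup rfl

end fiber

theorem eventually_dist_le_abs_dStar_sub (x : G) :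
    ∀ᶠ y in 𝓝 x, dist x y ≤ |R.dStar x - R.dStar y| := by
  filter_upwards [R.graph.eventually_mem_edgeSet_imp x] with y hy
  obtain ⟨f, t, ht, rfl⟩ := R.graph.cover y
  obtain ⟨s, hs, rfl⟩ := hy f ⟨t, ht, rfl⟩
  rw [R.dStar_param f s hs, R.dStar_param f t ht, add_sub_add_left_eq_sub]
  exact R.graph.dist_param_le hs ht

theorem dist_le_of_lipschitzWith_dStar_comp {c : ℝ → G} (hc : Continuous c)
    (hd : LipschitzWith 1 (R.dStar ∘ c)) {a b : ℝ} (hab : a ≤ b) :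
    dist (c a) (c b) ≤ b - a := by
  have hS : IsClosed {t | dist (c a) (c t) ≤ t - a} := isClosed_le (by fun_prop) (by fun_prop)
  refine (hS.inter isClosed_Icc).mem_of_ge_of_forall_exists_gt (by simp) hab
    fun t ⟨ht, htab⟩ => ?_
  have hev : ∀ᶠ u in 𝓝[>] t, dist (c t) (c u) ≤ |R.dStar (c t) - R.dStar (c u)| :=
    nhdsWithin_le_nhds (hc.tendsto t |>.eventually (R.eventually_dist_le_abs_dStar_sub (c t)))
  obtain ⟨u, hu, hu'⟩ := (hev.and (Ioc_mem_nhdsGT htab.2)).exists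
  refine ⟨u, ?_, hu'⟩
  have hdu : |R.dStar (c t) - R.dStar (c u)| ≤ u - t := by
    simpa [Real.dist_eq, abs_sub_comm t, abs_of_pos (sub_pos.2 hu'.1)] using hd.dist_le_mul t u
  calc dist (c a) (c u) ≤ dist (c a) (c t) + dist (c t) (c u) := dist_triangle _ _ _
    _ ≤ u - a := by linarith [show dist (c a) (c t) ≤ t - a from ht]

theorem dist_π_le (hX : IsGeodesicSpace X) (x y : X) : dist (R.π x) (R.π y) ≤ dist x y := by
  obtain ⟨γ, hγ, hγ0, hγ1, -⟩ := hX.exists_lipschitzWith x y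
  have hd : LipschitzWith 1 (R.dStar ∘ R.π ∘ γ) := LipschitzWith.of_dist_le_mul fun s t => by
    simp only [Function.comp_apply, R.dStar_π, Real.dist_eq, dist_comm r (γ s),
      dist_comm r (γ t)]
    exact (abs_dist_sub_le _ _ r).trans (hγ.dist_le_mul s t)
  simpa [hγ0, hγ1] using
    R.dist_le_of_lipschitzWith_dStar_comp (R.continuous_π.comp hγ.continuous) hd
      (dist_nonneg (x := x) (y := y))

theorem eventually_exists_eq_param_of_dStar_lt (v : G) :
    ∀ᶠ y in 𝓝 v, R.dStar y < R.dStar v →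
      ∃ f, y ∈ R.graph.edgeSet f ∧
        ∃ w ∈ Ioc 0 (R.graph.len f), v = R.graph.param f w := by
  filter_upwards [R.graph.eventually_mem_edgeSet_imp v] with y hy hlt
  obtain ⟨f, t, ht, rfl⟩ := R.graph.cover y
  obtain ⟨w, hw, rfl⟩ := hy f ⟨t, ht, rfl⟩
  rw [R.dStar_param f t ht, R.dStar_param f w hw] at hlt
  exact ⟨f, ⟨t, ht, rfl⟩, w, ⟨by linarith [ht.1], hw.2⟩, rfl⟩

theorem not_isMergingVertex_param {e : R.graph.E} {s : ℝ} (hs : s ∈ Ioo 0 (R.graph.len e)) :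
    ¬ R.IsMergingVertex (R.graph.param e s) :=
  fun ⟨_, _, _, hf, _⟩ => R.graph.notMem_Ioo_of_param_eq_tgt hf.symm hs

theorem eq_of_param_eq_of_not_isMergingVertex {e f : R.graph.E} {s t : ℝ}
    (hs : s ∈ Ioc 0 (R.graph.len e)) (ht : t ∈ Ioc 0 (R.graph.len f))
    (h : R.graph.param e s = R.graph.param f t) (hm : ¬ R.IsMergingVertex (R.graph.param e s)) :
    e = f := by
  rcases ht.2.lt_or_eq with ht' | rfl
  · exact (R.graph.eq_of_param_eq ⟨ht.1, ht'⟩ (Ioc_subset_Icc_self hs) h.symm).symm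
  rcases hs.2.lt_or_eq with hs' | rfl
  · exact R.graph.eq_of_param_eq ⟨hs.1, hs'⟩ (Ioc_subset_Icc_self ht) h
  by_contra hne
  exact hm ⟨e, f, hne, rfl, h.symm⟩

theorem eventually_mem_edgeSet_of_not_isMergingVertex {e : R.graph.E} {s : ℝ}
    (hs : s ∈ Ioc 0 (R.graph.len e)) (hm : ¬ R.IsMergingVertex (R.graph.param e s)) :
    ∀ᶠ y in 𝓝 (R.graph.param e s), R.dStar y < R.dStar (R.graph.param e s) →
      y ∈ R.graph.edgeSet e := by
  filter_upwards [R.eventually_exists_eq_param_of_dStar_lt _] with y hy hlt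
  obtain ⟨f, hyf, w, hw, hfw⟩ := hy hlt
  rwa [R.eq_of_param_eq_of_not_isMergingVertex hs hw hfw hm]

theorem dStar_π_geodesic {γ : ℝ → X} {D : ℝ} (hγ0 : γ 0 = r)
    (hiso : ∀ s ∈ Icc 0 D, ∀ t ∈ Icc 0 D, dist (γ s) (γ t) = |s - t|) {u : ℝ}
    (hu : u ∈ Icc 0 D) :
    R.dStar (R.π (γ u)) = u := by
  rw [R.dStar_π, ← hγ0, hiso 0 ⟨le_rfl, hu.1.trans hu.2⟩ u hu, zero_sub, abs_neg,
    abs_of_nonneg hu.1]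

theorem eventually_eq_param_of_not_isMergingVertex {c : ℝ → G} (hc : Continuous c)
    {e : R.graph.E} {u : ℝ} (hu : c u = R.graph.param e (u - R.dStar (R.graph.param e 0)))
    (hσ : u - R.dStar (R.graph.param e 0) ∈ Ioc 0 (R.graph.len e))
    (hm : ¬ R.IsMergingVertex (c u)) (hd : ∀ᶠ v in 𝓝[<] u, R.dStar (c v) = v) :
    ∀ᶠ v in 𝓝[<] u, c v = R.graph.param e (v - R.dStar (R.graph.param e 0)) := by
  have hev := hc.tendsto u |>.eventually
    (hu ▸ R.eventually_mem_edgeSet_of_not_isMergingVertex hσ (hu ▸ hm))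
  filter_upwards [nhdsWithin_le_nhds hev, hd, self_mem_nhdsWithin] with v hv hdv hvu
  obtain ⟨τ, hτ, hτv⟩ := hv (by
    rw [hdv, hu, R.dStar_param e _ (Ioc_subset_Icc_self hσ)]
    linarith [show v < u from hvu])
  rw [← hτv, R.dStar_param e τ hτ] at hdv
  rw [← hτv, ← hdv, add_sub_cancel_left]

/-- Away from merging vertices, the geodesic from `r` to `x` projects onto the edge through
`π x`, so it realizes the descent along that edge exactly. -/
theorem exists_descent_of_not_isMergingVertex (hX : IsGeodesicSpace X) {e : R.graph.E} {s : ℝ}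
    (hs : s ∈ Ioc 0 (R.graph.len e)) (hm : ¬ R.IsMergingVertex (R.graph.param e s)) {x : X}
    (hx : R.π x = R.graph.param e s) {t : ℝ} (ht : t ∈ Icc 0 s) :
    ∃ y, R.π y = R.graph.param e t ∧ dist x y ≤ s - t := by
  obtain ⟨γ, hγ, hγ0, hγx, hiso⟩ := hX.exists_lipschitzWith r x
  set h := R.dStar (R.graph.param e 0)
  have hD : dist r x = h + s := by
    rw [← R.dStar_π, hx, R.dStar_param e s (Ioc_subset_Icc_self hs)]
  have hh : 0 ≤ h := R.dStar_nonneg _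
  set c := R.π ∘ γ
  have hc : Continuous c := R.continuous_π.comp hγ.continuous
  set S := {u | c u = R.graph.param e (u - h)}
  have hS : IsClosed (S ∩ Icc (h + t) (h + s)) := by
    have hF : ContinuousOn (fun u => (c u, R.graph.param e (u - h))) (Icc (h + t) (h + s)) :=
      hc.continuousOn.prodMk <| (R.graph.param_lipschitz e).continuousOn.comp (by fun_prop)
        fun u hu => ⟨by linarith [hu.1, ht.1], by linarith [hu.2, hs.2]⟩
    rw [inter_comm]
    exact hF.preimage_isClosed_of_isClosed isClosed_Icc isClosed_diagonal
  have hon : h + t ∈ S := by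
    refine hS.mem_of_ge_of_forall_exists_lt ?_ (by linarith [ht.2]) fun u ⟨hu, hut⟩ => ?_
    · show R.π (γ (h + s)) = R.graph.param e (h + s - h)
      rw [← hD, hγx, hx, hD, add_sub_cancel_left]
    have hσ : u - h ∈ Ioc 0 (R.graph.len e) :=
      ⟨by linarith [hut.1, ht.1], by linarith [hut.2, hs.2]⟩
    have hmu : ¬ R.IsMergingVertex (c u) := by
      rw [hu]
      rcases (show u - h ≤ s by linarith [hut.2]).lt_or_eq with hlt | heq
      · exact R.not_isMergingVertex_param ⟨hσ.1, hlt.trans_le hs.2⟩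
      · rwa [heq]
    have hd : ∀ᶠ v in 𝓝[<] u, R.dStar (c v) = v :=
      mem_of_superset (Ioo_mem_nhdsLT (by linarith [hut.1, ht.1] : 0 < u)) fun v hv =>
        R.dStar_π_geodesic hγ0 hiso ⟨hv.1.le, by linarith [hv.2, hut.2]⟩
    obtain ⟨v, hv, hvu⟩ := ((R.eventually_eq_param_of_not_isMergingVertex hc hu hσ hmu hd).and
      (Ioo_mem_nhdsLT hut.1)).exists
    exact ⟨v, hv, hvu.1.le, hvu.2⟩
  refine ⟨γ (h + t), hon.trans (by rw [add_sub_cancel_left]), ?_⟩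
  rw [← hγx, hiso _ ⟨dist_nonneg, le_rfl⟩ _ ⟨by linarith [ht.1], by linarith [ht.2]⟩, hD,
    abs_of_nonneg (by linarith [ht.2])]
  linarith

/-- The exact descents from interior points of `e` accumulate, by compactness, to an exact
descent starting from some point of the fibre over `param e s`, also when that point is a
merging vertex. -/
theorem exists_dist_le_of_le [CompactSpace X] (hX : IsGeodesicSpace X) {e : R.graph.E}
    {s t : ℝ} (ht : 0 ≤ t) (hts : t ≤ s) (hs : s ≤ R.graph.len e) :
    ∃ z y, R.π z = R.graph.param e s ∧ R.π y = R.graph.param e t ∧ dist z y ≤ s - t := by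
  rcases hts.eq_or_lt with rfl | hts
  · obtain ⟨z, hz⟩ := R.surj (R.graph.param e t)
    exact ⟨z, z, hz, hz, by simp⟩
  set K : Set (ℝ × X × X) :=
    ({q | q.1 ∈ Icc t s} ∩ (fun q => (R.π q.2.1, R.graph.param e q.1)) ⁻¹' diagonal G) ∩
      {q | R.π q.2.2 = R.graph.param e t ∧ dist q.2.1 q.2.2 ≤ q.1 - t}
  have hπ := R.continuous_π
  have hK : IsCompact K := by
    refine (isCompact_Icc.prod isCompact_univ).of_isClosed_subset ?_
      fun q hq => ⟨hq.1.1, mem_univ _⟩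
    refine ContinuousOn.preimage_isClosed_of_isClosed ?_
      (isClosed_Icc.preimage continuous_fst) isClosed_diagonal |>.inter ?_
    · exact (by fun_prop : Continuous fun q : ℝ × X × X => R.π q.2.1).continuousOn.prodMk
        ((R.graph.param_lipschitz e).continuousOn.comp continuous_fst.continuousOn
          fun q hq => ⟨ht.trans hq.1, hq.2.trans hs⟩)
    · exact (isClosed_eq (by fun_prop) continuous_const).inter
        (isClosed_le (f := fun q : ℝ × X × X => dist q.2.1 q.2.2) (by fun_prop) (by fun_prop))
  have hsub : Ioo t s ⊆ Prod.fst '' K := fun σ hσ => by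
    obtain ⟨z, hz⟩ := R.surj (R.graph.param e σ)
    obtain ⟨y, hy, hzy⟩ := R.exists_descent_of_not_isMergingVertex hX
      ⟨ht.trans_lt hσ.1, hσ.2.le.trans hs⟩
      (R.not_isMergingVertex_param ⟨ht.trans_lt hσ.1, hσ.2.trans_le hs⟩) hz ⟨ht, hσ.1.le⟩
    exact ⟨(σ, z, y), ⟨⟨Ioo_subset_Icc_self hσ, hz⟩, hy, hzy⟩, rfl⟩
  obtain ⟨⟨σ, z, y⟩, ⟨⟨-, hz⟩, hy, hzy⟩, rfl⟩ :=
    (hK.image continuous_fst).isClosed.closure_subset_iff.2 hsub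
      (by rw [closure_Ioo hts.ne]; exact right_mem_Icc.2 hts.le)
  exact ⟨z, y, hz, hy, hzy⟩

open Classical in
noncomputable def mergeCount (l : List G) : ℕ := l.countP fun v => R.IsMergingVertex v

theorem mergeCount_cons (v : G) (l : List G) :
    R.mergeCount (v :: l) = R.mergeCount [v] + R.mergeCount l := by
  rw [mergeCount, mergeCount, mergeCount, ← List.singleton_append, List.countP_append]

theorem mergeCount_singleton_of_isMergingVertex {v : G} (hv : R.IsMergingVertex v) :
    R.mergeCount [v] = 1 := by
  simp [mergeCount, hv]

theorem mergeCount_singleton_of_not_isMergingVertex {v : G} (hv : ¬ R.IsMergingVertex v) :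
    R.mergeCount [v] = 0 := by
  simp [mergeCount, hv]

theorem exists_descent [CompactSpace X] (hX : IsGeodesicSpace X) {e : R.graph.E} {s t : ℝ}
    (ht : 0 ≤ t) (hts : t ≤ s) (hs : s ≤ R.graph.len e) {x : X}
    (hx : R.π x = R.graph.param e s) :
    ∃ y, R.π y = R.graph.param e t ∧
      dist x y ≤ s - t + R.fiberDiamSup * R.mergeCount [R.graph.param e s] := by
  by_cases hm : R.IsMergingVertex (R.graph.param e s)
  · obtain ⟨z, y, hz, hy, hzy⟩ := R.exists_dist_le_of_le hX ht hts hs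
    refine ⟨y, hy, ?_⟩
    rw [R.mergeCount_singleton_of_isMergingVertex hm, Nat.cast_one, mul_one]
    linarith [dist_triangle x z y, R.dist_le_fiberDiamSup (hx.trans hz.symm)]
  rw [R.mergeCount_singleton_of_not_isMergingVertex hm, Nat.cast_zero, mul_zero, add_zero]
  rcases (ht.trans hts).eq_or_lt with rfl | hs0
  · obtain rfl : t = 0 := le_antisymm hts ht
    exact ⟨x, hx, by simp⟩
  exact R.exists_descent_of_not_isMergingVertex hX ⟨hs0, hs⟩ hm hx ⟨ht, hts⟩

/-- The only local minimum of `d_*` is `π r`. -/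
theorem exists_tgt_eq (hX : IsGeodesicSpace X) {v : G} (hv : v ∈ R.graph.vertexSet)
    (hvr : v ≠ R.π r) : ∃ f, R.graph.tgt f = v := by
  obtain ⟨x, rfl⟩ := R.surj v
  have hD : 0 < dist r x := dist_pos.2 fun h => hvr (h ▸ rfl)
  obtain ⟨γ, hγ, hγ0, hγx, hiso⟩ := hX.exists_lipschitzWith r x
  have hlim := (R.continuous_π.comp hγ.continuous).tendsto (dist r x)
  rw [Function.comp_apply, hγx] at hlim
  have hev : ∀ᶠ u in 𝓝[<] dist r x, _ :=
    nhdsWithin_le_nhds (hlim.eventually (R.eventually_exists_eq_param_of_dStar_lt (R.π x)))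
  obtain ⟨u, hu, hu0⟩ := (hev.and (Ioo_mem_nhdsLT hD)).exists
  obtain ⟨f, -, w, hw, hxw⟩ := hu (by
    rw [Function.comp_apply, R.dStar_π_geodesic hγ0 hiso ⟨hu0.1.le, hu0.2.le⟩, R.dStar_π]
    exact hu0.2)
  refine ⟨f, ?_⟩
  rcases hw.2.lt_or_eq with hlt | rfl
  · obtain ⟨e, he | he⟩ := hv
    · exact absurd (he.symm.trans hxw) (R.graph.endpoint_not_interior e f w ⟨hw.1, hlt⟩).1
    · exact absurd (he.symm.trans hxw) (R.graph.endpoint_not_interior e f w ⟨hw.1, hlt⟩).2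
  · exact hxw.symm

open Classical in
noncomputable def mergingVertices : Finset G :=
  (Finset.univ.image R.graph.tgt).filter R.IsMergingVertex

/-- Each vertex other than `π r` has an incoming edge and each merging vertex a second one,
so `#E ≥ (#V - 1) + #mergingVertices`. -/
theorem card_mergingVertices_le_betti1 (hX : IsGeodesicSpace X) :
    R.mergingVertices.card ≤ R.graph.betti1 := by
  classical
  set V := Finset.univ.image R.graph.src ∪ Finset.univ.image R.graph.tgt
  set indeg := fun v => (Finset.univ.filter fun e => R.graph.tgt e = v).card
  have hV : Nat.card R.graph.vertexSet = V.card := by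
    rw [Nat.card_coe_set_eq, ← Set.ncard_coe_finset]
    congr 1
    ext v
    simp [V, vertexSet, eq_comm, exists_or]
  have hE : Nat.card R.graph.E = ∑ v ∈ V, indeg v := by
    rw [Nat.card_eq_fintype_card, ← Finset.card_univ]
    exact Finset.card_eq_sum_card_fiberwise fun e _ =>
      Finset.mem_union_right _ (Finset.mem_image_of_mem _ (Finset.mem_univ e))
  have hindeg : ∀ v ∈ V, 1 + (if R.IsMergingVertex v then 1 else 0) ≤
      indeg v + if v = R.π r then 1 else 0 := by
    intro v hv
    by_cases hm : R.IsMergingVertex v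
    · obtain ⟨e₁, e₂, hne, h₁, h₂⟩ := hm
      have : 1 < indeg v := Finset.one_lt_card.2 ⟨e₁, by simpa, e₂, by simpa, hne⟩
      split_ifs <;> omega
    by_cases hvr : v = R.π r
    · subst hvr
      simp [hm]
    obtain ⟨f, hf⟩ :=
      R.exists_tgt_eq hX (by simpa [V, vertexSet, eq_comm, exists_or] using hv) hvr
    have : 0 < indeg v := Finset.card_pos.2 ⟨f, by simpa⟩
    simp only [hm, hvr, if_false]
    omega
  have hroot : (V.filter (· = R.π r)).card ≤ 1 := Finset.card_le_one.2 fun a ha b hb => by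
    rw [(Finset.mem_filter.1 ha).2, (Finset.mem_filter.1 hb).2]
  have hsub : R.mergingVertices ⊆ {v ∈ V | R.IsMergingVertex v} :=
    Finset.filter_subset_filter _ Finset.subset_union_right
  have hsum := Finset.sum_le_sum hindeg
  simp only [Finset.sum_add_distrib, Finset.sum_const, smul_eq_mul, mul_one, Finset.sum_boole,
    Nat.cast_id] at hsum
  have := Finset.card_le_card hsub
  rw [betti1, hV, hE]
  omega

theorem mergeCount_le_card_mergingVertices {l : List G} (hl : l.Nodup) :
    R.mergeCount l ≤ R.mergingVertices.card := by
  classical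
  rw [mergeCount, List.countP_eq_length_filter, ← List.toFinset_card_of_nodup (hl.filter _)]
  refine Finset.card_le_card fun v hv => ?_
  have hm : R.IsMergingVertex v := by simpa using (List.mem_filter.1 (List.mem_toFinset.1 hv)).2
  obtain ⟨e, -, -, he, -⟩ := id hm
  exact Finset.mem_filter.2 ⟨Finset.mem_image.2 ⟨e, Finset.mem_univ _, he⟩, hm⟩

theorem isMergingVertex_of_isChain_cons {s : R.graph.Step} {W : List R.graph.Step} {q : G}
    (hs : s.IsValid) (hW : R.graph.IsWalk s.finish q W)
    (hchain : (s :: W).IsChain fun s t => s.e ≠ t.e) (hasc : s.a < s.b) :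
    ∀ t ∈ W.head?, t.b < t.a → R.IsMergingVertex s.finish := by
  intro t hhead hdesc
  cases W with
  | nil => cases hhead
  | cons t' W =>
    obtain rfl : t' = t := Option.some_inj.1 hhead
    obtain ⟨hst, ht, -⟩ := IsWalk.cons_iff.1 hW
    by_contra hm
    exact (List.isChain_cons_cons.1 hchain).1 (R.eq_of_param_eq_of_not_isMergingVertex
      ⟨hs.1.1.trans_lt hasc, hs.2.2⟩ ⟨ht.2.1.trans_lt hdesc, ht.1.2⟩ hst hm)

section lift

variable [CompactSpace X]

theorem exists_lift_of_descending (hX : IsGeodesicSpace X) {s : R.graph.Step} (hs : s.IsValid)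
    (hba : s.b ≤ s.a) {x : X} (hx : R.π x = s.start) :
    ∃ y, R.π y = s.finish ∧
      dist x y ≤ s.length + R.fiberDiamSup * R.mergeCount [s.start] := by
  rw [Step.length, abs_of_nonneg (sub_nonneg.2 hba)]
  exact R.exists_descent hX hs.2.1 hba hs.1.2 hx

theorem exists_lift_pair_of_descending (hX : IsGeodesicSpace X) {s : R.graph.Step}
    (hs : s.IsValid) (hba : s.b ≤ s.a) :
    ∃ x y, R.π x = s.start ∧ R.π y = s.finish ∧ dist x y ≤ s.length := by
  rw [Step.length, abs_of_nonneg (sub_nonneg.2 hba)]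
  exact R.exists_dist_le_of_le hX hs.2.1 hba hs.1.2

/-- Descending steps lift from any prescribed point (with an extra jump of size `M` inside the
fibre when leaving a merging vertex), ascending steps only backwards from a point over their
end. Hence the second statement, where the lift starts at a point of our choice, and a jump of
size `M` to reach that point from a prescribed one. A point between an ascending and a
descending step is a merging vertex; counted twice, it pays for that jump. -/
theorem exists_lift (hX : IsGeodesicSpace X) {W : List R.graph.Step} {p q : G}
    (hW : R.graph.IsWalk p q W) (hchain : W.IsChain fun s t => s.e ≠ t.e)
    (hdeg : ∀ s ∈ W, s.a ≠ s.b) :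
    (∀ x, R.π x = p → ∃ y, R.π y = q ∧
      dist x y ≤ walkLength W + R.fiberDiamSup * (2 * R.mergeCount (walkSupport p W) + 1)) ∧
    ((∀ s ∈ W.head?, s.b < s.a → R.IsMergingVertex p) → ∃ x y, R.π x = p ∧ R.π y = q ∧
      dist x y ≤ walkLength W +
        R.fiberDiamSup * (2 * R.mergeCount (W.map Step.finish) + R.mergeCount [p])) := by
  obtain ⟨x₀, -⟩ := R.surj p
  have : Nonempty X := ⟨x₀⟩
  have hM := R.fiberDiamSup_nonneg
  induction W generalizing p with
  | nil =>
    obtain rfl := hW.eq_of_nil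
    refine ⟨fun x hx => ⟨x, hx, by simp; positivity⟩, fun _ => ?_⟩
    obtain ⟨x, hx⟩ := R.surj p
    exact ⟨x, x, hx, hx, by simp; positivity⟩
  | cons s W ih =>
    obtain ⟨rfl, hs, hW⟩ := IsWalk.cons_iff.1 hW
    obtain ⟨ihA, ihB⟩ := ih hW hchain.tail fun t ht => hdeg t (List.mem_cons_of_mem _ ht)
    have hcount := R.mergeCount_cons s.start (s.finish :: W.map Step.finish)
    have hcount' := R.mergeCount_cons s.finish (W.map Step.finish)
    have hstart := mul_nonneg hM (Nat.cast_nonneg (α := ℝ) (R.mergeCount [s.start]))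
    simp only [walkSupport, List.map_cons, walkLength_cons, hcount, hcount'] at ihA ihB ⊢
    push_cast at ihA ⊢
    rcases (hdeg s List.mem_cons_self).lt_or_gt with hasc | hdesc
    · obtain ⟨z, y, hz, hy, hzy⟩ := ihB (R.isMergingVertex_of_isChain_cons hs hW hchain hasc)
      obtain ⟨x, hx, hzx⟩ := R.exists_lift_of_descending hX
        ((Step.isValid_reverse s).2 hs) hasc.le hz
      simp only [Step.reverse_start, Step.reverse_length, dist_comm z] at hzx
      refine ⟨fun x' hx' => ⟨y, hy, ?_⟩, fun _ => ⟨x, y, hx, hy, ?_⟩⟩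
      · linarith [dist_triangle x' x y, dist_triangle x z y,
          R.dist_le_fiberDiamSup (hx'.trans hx.symm)]
      · linarith [dist_triangle x z y]
    · refine ⟨fun x hx => ?_, fun hhead => ?_⟩
      · obtain ⟨z, hz, hxz⟩ := R.exists_lift_of_descending hX hs hdesc.le hx
        obtain ⟨y, hy, hzy⟩ := ihA z hz
        exact ⟨y, hy, by linarith [dist_triangle x z y]⟩
      · obtain ⟨x, z, hx, hz, hxz⟩ := R.exists_lift_pair_of_descending hX hs hdesc.le
        obtain ⟨y, hy, hzy⟩ := ihA z hz
        rw [R.mergeCount_singleton_of_isMergingVertex (hhead s rfl hdesc), Nat.cast_one]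
        exact ⟨x, y, hx, hy, by linarith [dist_triangle x z y]⟩

end lift

theorem dist_le_dist_π_add [CompactSpace X] [ConnectedSpace X] (hX : IsGeodesicSpace X)
    (x y : X) :
    dist x y ≤ dist (R.π x) (R.π y) + 2 * ((R.graph.betti1 : ℝ) + 1) * R.fiberDiamSup := by
  have : ConnectedSpace G := R.surj.connectedSpace R.continuous_π
  have : Nonempty X := ⟨x⟩
  refine le_of_forall_pos_lt_add fun ε hε => ?_
  obtain ⟨W₀, hW₀, hlen₀⟩ := R.graph.exists_walkLength_lt_dist_add (R.π x) (R.π y) hε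
  obtain ⟨W, hW, hlen, hnd, hchain⟩ := hW₀.exists_nodup_isChain R.injOn_param
  obtain ⟨w, hw, hxw⟩ := (R.exists_lift hX hW hchain (hW.start_ne_finish_of_nodup hnd)).1 x rfl
  have hcount : (R.mergeCount (walkSupport (R.π x) W) : ℝ) ≤ R.graph.betti1 := by
    exact_mod_cast (R.mergeCount_le_card_mergingVertices hnd).trans
      (R.card_mergingVertices_le_betti1 hX)
  have := mul_le_mul_of_nonneg_left hcount R.fiberDiamSup_nonneg
  linarith [dist_triangle x w y, R.dist_le_fiberDiamSup hw]

end ReebGraphOf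

/-- The Gromov-Hausdorff distance between a compact connected geodesic space `X` and the
metric Reeb graph `G` of `d = d_X(r,·)` is at most `(β₁(G)+1)·M`, where `M` is the
supremum of the diameters of the fibers of the quotient map `π`. -/
theorem ghDist_le_reeb {X : Type*} [MetricSpace X] [CompactSpace X] [Nonempty X]
    [ConnectedSpace X] (hX : IsGeodesicSpace X) (r : X)
    {G : Type*} [MetricSpace G] [CompactSpace G] [Nonempty G] (R : ReebGraphOf X r G) :
    GromovHausdorff.ghDist X G ≤ ((R.graph.betti1 : ℝ) + 1) * R.fiberDiamSup := by
  have hε : 0 ≤ 2 * ((R.graph.betti1 : ℝ) + 1) * R.fiberDiamSup :=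
    mul_nonneg (by positivity) R.fiberDiamSup_nonneg
  calc GromovHausdorff.ghDist X G ≤ 2 * ((R.graph.betti1 : ℝ) + 1) * R.fiberDiamSup / 2 :=
        GromovHausdorff.ghDist_le_of_surjective R.surj fun x y => abs_le.2
          ⟨by linarith [R.dist_π_le hX x y], by linarith [R.dist_le_dist_π_add hX x y]⟩
    _ = ((R.graph.betti1 : ℝ) + 1) * R.fiberDiamSup := by ring
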